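/- arXiv:1508.04205 — 2 statements merged into one kernel-verified Lean document; each statement's English description precedes it below -/
import Mathlib

section
/- Let P(z) = (P¹(z), …, P^p(z)) and Q(z) = (Q¹(z), …, Q^q(z)) be polynomial mappings in z = (z¹, …, zⁿ) ∈ ℂⁿ such that ‖P(z)‖² = ‖Q(z)‖² for all z ∈ ℂⁿ. Then the components of P and the components of Q span the same complex vector subspace of ℂ[z¹, …, zⁿ]; in particular P and Q have the same linear rank. -/
/-!
`‖P(z)‖² = ∑ₖ Pₖ(z) · conj Pₖ(z)` is the restriction of the polynomial
`polarizedNormSq P (z, w) = ∑ₖ Pₖ(z) P̄ₖ(w)` in `2n` variables (`P̄ₖ` with conjugated coefficients)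
to the conjugate diagonal `w = z̄`. After the substitution `z = x + i y`, `w = x - i y` this
diagonal becomes the real points, where a polynomial cannot vanish without being zero; hence
`polarizedNormSq P = polarizedNormSq Q`. Freezing `w` shows `∑ₖ P̄ₖ(w) Pₖ ∈ span Q` for every `w`.
If a linear functional `φ` kills `span Q`, this says `∑ₖ φ(Pₖ) P̄ₖ = 0`; conjugating the
coefficients and applying `φ` once more gives `∑ₖ |φ(Pₖ)|² = 0`, so `φ` kills every `Pₖ`.
-/

open ComplexConjugate

namespace MvPolynomial

variable {σ : Type*}

theorem eval_bind₁ {τ R : Type*} [CommSemiring R] (f : σ → MvPolynomial τ R) (x : τ → R)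
    (g : MvPolynomial σ R) : eval x (bind₁ f g) = eval (fun i => eval x (f i)) g :=
  eval₂Hom_bind₁ (RingHom.id R) x f g

theorem eq_zero_of_forall_eval_ofReal_eq_zero {p : MvPolynomial σ ℂ}
    (h : ∀ x : σ → ℝ, eval (fun i => (x i : ℂ)) p = 0) : p = 0 := by
  refine funext_set (fun _ => Set.range ((↑) : ℝ → ℂ))
    (fun _ => Set.infinite_range_of_injective Complex.ofReal_injective) fun z hz => ?_
  choose x hx using fun i => hz i (Set.mem_univ i)
  rw [map_zero, ← _root_.funext hx]
  exact h x

theorem eq_zero_of_forall_eval_sumElim_conj_eq_zero {g : MvPolynomial (σ ⊕ σ) ℂ}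
    (hg : ∀ z : σ → ℂ, eval (Sum.elim z fun i => conj (z i)) g = 0) : g = 0 := by
  let f : σ ⊕ σ → MvPolynomial (σ ⊕ σ) ℂ :=
    Sum.elim (fun j => X (.inl j) + C Complex.I * X (.inr j))
      (fun j => X (.inl j) - C Complex.I * X (.inr j))
  have hfg : bind₁ f g = 0 := eq_zero_of_forall_eval_ofReal_eq_zero fun x => by
    have hx : (fun i => eval (fun i => (x i : ℂ)) (f i)) =
        Sum.elim (fun j => x (.inl j) + Complex.I * x (.inr j))
          fun j => conj (x (.inl j) + Complex.I * x (.inr j)) := by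
      funext i
      cases i <;> simp [f, Complex.ext_iff]
    rw [eval_bind₁, hx, hg]
  refine MvPolynomial.funext fun v => ?_
  let u : σ ⊕ σ → ℂ := Sum.elim (fun j => (v (.inl j) + v (.inr j)) / 2)
    (fun j => (v (.inl j) - v (.inr j)) / (2 * Complex.I))
  have hv : v = fun i => eval u (f i) := by
    funext i
    cases i <;> simp [f, u] <;> field_simp <;> ring
  rw [map_zero, hv, ← eval_bind₁, hfg, map_zero]

theorem eval_map_conj_conj (z : σ → ℂ) (p : MvPolynomial σ ℂ) :
    eval (fun i => conj (z i)) (map conj p) = conj (eval z p) := by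
  rw [eval_map]
  exact (eval₂_comp_left conj (RingHom.id ℂ) z p).symm

theorem map_conj_map_conj (p : MvPolynomial σ ℂ) : map conj (map conj p) = p := by
  rw [map_map, show (starRingEnd ℂ).comp (starRingEnd ℂ) = RingHom.id ℂ from
    RingHom.ext Complex.conj_conj, map_id]

section Polarization

variable {ι κ : Type*} [Fintype ι] [Fintype κ]

noncomputable def polarizedNormSq (P : ι → MvPolynomial σ ℂ) : MvPolynomial (σ ⊕ σ) ℂ :=
  ∑ k, rename Sum.inl (P k) * rename Sum.inr (map conj (P k))

theorem eval_polarizedNormSq (P : ι → MvPolynomial σ ℂ) (z w : σ → ℂ) :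
    eval (Sum.elim z w) (polarizedNormSq P) = ∑ k, eval z (P k) * eval w (map conj (P k)) := by
  simp only [polarizedNormSq, map_sum, map_mul, eval_rename, Sum.elim_comp_inl,
    Sum.elim_comp_inr]

theorem eval_polarizedNormSq_conj (P : ι → MvPolynomial σ ℂ) (z : σ → ℂ) :
    eval (Sum.elim z fun i => conj (z i)) (polarizedNormSq P) =
      ∑ k, (Complex.normSq (eval z (P k)) : ℂ) := by
  simp only [eval_polarizedNormSq, eval_map_conj_conj, Complex.mul_conj]

theorem polarizedNormSq_eq_of_normSq_eq {P : ι → MvPolynomial σ ℂ} {Q : κ → MvPolynomial σ ℂ}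
    (h : ∀ z, ∑ k, Complex.normSq (eval z (P k)) = ∑ k, Complex.normSq (eval z (Q k))) :
    polarizedNormSq P = polarizedNormSq Q :=
  sub_eq_zero.mp <| eq_zero_of_forall_eval_sumElim_conj_eq_zero fun z => by
    simp only [map_sub, eval_polarizedNormSq_conj, ← Complex.ofReal_sum, h z, sub_self]

theorem sum_smul_eq_of_polarizedNormSq_eq {P : ι → MvPolynomial σ ℂ}
    {Q : κ → MvPolynomial σ ℂ} (hPQ : polarizedNormSq P = polarizedNormSq Q) (w : σ → ℂ) :
    ∑ k, eval w (map conj (P k)) • P k = ∑ j, eval w (map conj (Q j)) • Q j :=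
  MvPolynomial.funext fun z => by
    simpa only [map_sum, smul_eval, eval_polarizedNormSq, mul_comm] using
      congrArg (eval (Sum.elim z w)) hPQ

theorem span_range_le_of_polarizedNormSq_eq {P : ι → MvPolynomial σ ℂ}
    {Q : κ → MvPolynomial σ ℂ} (hPQ : polarizedNormSq P = polarizedNormSq Q) :
    Submodule.span ℂ (Set.range P) ≤ Submodule.span ℂ (Set.range Q) := by
  refine Submodule.span_le.mpr (Set.range_subset_iff.mpr fun k₀ => ?_)
  by_contra hk₀
  obtain ⟨φ, hφP, hφQ⟩ := Submodule.exists_dual_map_eq_bot_of_notMem hk₀ inferInstance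
  have hφQ' (j : κ) : φ (Q j) = 0 :=
    (Submodule.mem_bot ℂ).mp (hφQ ▸ Submodule.mem_map_of_mem (Submodule.subset_span ⟨j, rfl⟩))
  have hconj : ∑ k, φ (P k) • map conj (P k) = 0 := MvPolynomial.funext fun w => by
    simpa [hφQ', mul_comm] using congrArg φ (sum_smul_eq_of_polarizedNormSq_eq hPQ w)
  have hconj' : ∑ k, C (conj (φ (P k))) * P k = 0 := by
    simpa only [map_sum, map_zero, smul_eq_C_mul, map_mul, map_C, map_conj_map_conj] using
      congrArg (map conj) hconj
  have hnormSq : ∑ k, Complex.normSq (φ (P k)) = 0 := by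
    have := congrArg φ hconj'
    simp only [map_sum, map_zero, ← smul_eq_C_mul, map_smul, smul_eq_mul,
      ← Complex.normSq_eq_conj_mul_self] at this
    exact_mod_cast this
  exact hφP <| Complex.normSq_eq_zero.mp <|
    (Finset.sum_eq_zero_iff_of_nonneg fun k _ => Complex.normSq_nonneg _).mp hnormSq k₀
      (Finset.mem_univ k₀)

end Polarization

end MvPolynomial

/-- If two polynomial mappings `P = (P¹,…,P^p)` and `Q = (Q¹,…,Q^q)` on `ℂⁿ` satisfy
`‖P(z)‖² = ‖Q(z)‖²` for all `z ∈ ℂⁿ`, then the components of `P` and of `Q` span the same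
complex subspace of `ℂ[z¹,…,zⁿ]`; in particular `P` and `Q` have the same linear rank. -/
theorem span_eq_of_sqNorm_eq {n p q : ℕ}
    (P : Fin p → MvPolynomial (Fin n) ℂ) (Q : Fin q → MvPolynomial (Fin n) ℂ)
    (h : ∀ z : Fin n → ℂ,
      ∑ k, Complex.normSq (MvPolynomial.eval z (P k)) =
        ∑ k, Complex.normSq (MvPolynomial.eval z (Q k))) :
    Submodule.span ℂ (Set.range P) = Submodule.span ℂ (Set.range Q) ∧
      Module.finrank ℂ (Submodule.span ℂ (Set.range P)) =
        Module.finrank ℂ (Submodule.span ℂ (Set.range Q)) := by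
  have hPQ := MvPolynomial.polarizedNormSq_eq_of_normSq_eq h
  have hspan : Submodule.span ℂ (Set.range P) = Submodule.span ℂ (Set.range Q) :=
    le_antisymm (MvPolynomial.span_range_le_of_polarizedNormSq_eq hPQ)
      (MvPolynomial.span_range_le_of_polarizedNormSq_eq hPQ.symm)
  exact ⟨hspan, by rw [hspan]⟩
end

section
/- Let F, G, P be polynomial mappings in z = (z¹, …, zⁿ) ∈ ℂⁿ such that ‖P(z)‖² = (‖F(z)‖² − ‖G(z)‖²)·‖z‖² for all z ∈ ℂⁿ. Then V_P + V_{G⊗z} = V_{F⊗z}; in particular V_{G⊗z} ⊆ V_{F⊗z}, i.e., every product G^k(z)·zⁱ lies in the complex span of the products F^j(z)·zⁱ. -/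
/-!
Polarization turns the hypothesis into an identity of Gram kernels: if `∑ |Aₐ(z)|² = ∑ |B_b(z)|²`
for all `z`, then `∑ Aₐ(z) conj (Aₐ(w)) = ∑ B_b(z) conj (B_b(w))` for all `z, w`, because a
polynomial in `z` and `conj z` that vanishes identically has zero coefficients. Freezing `w`,
`∑ conj (Aₐ(w)) • Aₐ` lies in the span of the `B_b`; if a functional `φ` vanished on that span
but not at some `Aₐ`, then `∑ conj (φ Aₐ) • Aₐ` would vanish at every point and `φ` of it,
`∑ |φ Aₐ|²`, would be zero. So the two spans coincide. The theorem is the case where the `Aₐ`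
are the components of `P` and `G ⊗ z` and the `B_b` those of `F ⊗ z`, since
`‖H ⊗ z‖² = ‖H‖² ‖z‖²`.
-/

open scoped ComplexConjugate

theorem Submodule.span_range_le_of_sum_conj_smul_mem {𝕜 V W ι : Type*} [RCLike 𝕜]
    [AddCommGroup V] [Module 𝕜 V] [Fintype ι]
    (ev : W → Module.Dual 𝕜 V) (hev : ∀ v, (∀ w, ev w v = 0) → v = 0)
    {S : Submodule 𝕜 V} (A : ι → V) (h : ∀ w, ∑ a, conj (ev w (A a)) • A a ∈ S) :
    span 𝕜 (Set.range A) ≤ S := by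
  rw [span_le, ← Subspace.dualAnnihilator_dualCoannihilator_eq (W := S)]
  rintro _ ⟨a₀, rfl⟩
  rw [SetLike.mem_coe, mem_dualCoannihilator]
  intro φ hφ
  rw [mem_dualAnnihilator] at hφ
  have hφev : ∀ w, ∑ a, conj (ev w (A a)) * φ (A a) = 0 := fun w => by
    simpa using hφ _ (h w)
  have hsum : ∑ a, conj (φ (A a)) • A a = 0 := hev _ fun w => by
    simpa [mul_comm] using congrArg conj (hφev w)
  have hnorm : ∑ a, ‖φ (A a)‖ ^ 2 = 0 := by
    have := congrArg φ hsum
    simp only [map_sum, map_smul, smul_eq_mul, RCLike.conj_mul, map_zero] at this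
    exact_mod_cast this
  simpa using (Finset.sum_eq_zero_iff_of_nonneg (fun a _ => sq_nonneg ‖φ (A a)‖)).mp hnorm a₀
    (Finset.mem_univ _)

namespace MvPolynomial

theorem eq_zero_of_eval_ofReal_eq_zero {σ : Type*} {p : MvPolynomial σ ℂ}
    (h : ∀ x : σ → ℝ, eval (fun i => (x i : ℂ)) p = 0) : p = 0 := by
  refine funext_set (fun _ => Set.range Complex.ofReal)
    (fun _ => Set.infinite_range_of_injective Complex.ofReal_injective) fun x hx => ?_
  choose v hv using fun i => hx i trivial
  rw [map_zero, ← h v]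
  congr
  exact (_root_.funext hv).symm

open Complex in
theorem eq_zero_of_eval_sum_elim_conj_eq_zero {σ : Type*}
    {p : MvPolynomial (σ ⊕ σ) ℂ} (h : ∀ z : σ → ℂ, eval (Sum.elim z (conj z)) p = 0) :
    p = 0 := by
  -- substitute `z = x + i y` and `conj z = x - i y`; then `x, y` may be taken real
  let g : σ ⊕ σ → MvPolynomial (σ ⊕ σ) ℂ :=
    Sum.elim (fun j => X (.inl j) + C I * X (.inr j)) (fun j => X (.inl j) - C I * X (.inr j))
  have eval_bind : ∀ v, eval v (bind₁ g p) = eval (fun s => eval v (g s)) p := fun v =>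
    eval₂Hom_bind₁ (RingHom.id ℂ) v g p
  have hg : bind₁ g p = 0 := eq_zero_of_eval_ofReal_eq_zero fun v => by
    rw [eval_bind, ← h fun j => v (.inl j) + I * v (.inr j)]
    congr 1
    ext (j | j) <;> simp [g, sub_eq_add_neg]
  refine funext fun x => ?_
  let v : σ ⊕ σ → ℂ := Sum.elim (fun j => (x (.inl j) + x (.inr j)) / 2)
    (fun j => (x (.inl j) - x (.inr j)) / (2 * I))
  rw [map_zero, ← map_zero (eval v), ← hg, eval_bind]
  congr 1
  ext (j | j) <;> simp [g, v] <;> field_simp <;> ring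

variable {σ ι κ : Type*} [Fintype ι] [Fintype κ]

theorem eval_conj_map_conj (w : σ → ℂ) (p : MvPolynomial σ ℂ) :
    eval (conj w) (map (starRingEnd ℂ) p) = conj (eval w p) := by
  rw [eval_map, ← eval₂_id (g := w) p, eval₂_comp_left (starRingEnd ℂ)]
  rfl

noncomputable def sumMulConj (A : ι → MvPolynomial σ ℂ) : MvPolynomial (σ ⊕ σ) ℂ :=
  ∑ a, rename Sum.inl (A a) * rename Sum.inr (map (starRingEnd ℂ) (A a))

theorem eval_sumMulConj (A : ι → MvPolynomial σ ℂ) (z w : σ → ℂ) :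
    eval (Sum.elim z (conj w)) (sumMulConj A) = ∑ a, eval z (A a) * conj (eval w (A a)) := by
  simp only [sumMulConj, map_sum, map_mul, eval_rename, Sum.elim_comp_inl, Sum.elim_comp_inr,
    eval_conj_map_conj]

theorem sum_eval_mul_conj_eq_of_sum_normSq_eval_eq {A : ι → MvPolynomial σ ℂ}
    {B : κ → MvPolynomial σ ℂ}
    (h : ∀ z, ∑ a, Complex.normSq (eval z (A a)) = ∑ b, Complex.normSq (eval z (B b)))
    (z w : σ → ℂ) :
    ∑ a, eval z (A a) * conj (eval w (A a)) = ∑ b, eval z (B b) * conj (eval w (B b)) := by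
  have hAB : sumMulConj A = sumMulConj B := sub_eq_zero.mp <|
    eq_zero_of_eval_sum_elim_conj_eq_zero fun z => by
      simp only [map_sub, eval_sumMulConj, Complex.mul_conj, ← Complex.ofReal_sum, h z, sub_self]
  rw [← eval_sumMulConj, hAB, eval_sumMulConj]

theorem span_range_le_of_sum_normSq_eval_eq {A : ι → MvPolynomial σ ℂ}
    {B : κ → MvPolynomial σ ℂ}
    (h : ∀ z, ∑ a, Complex.normSq (eval z (A a)) = ∑ b, Complex.normSq (eval z (B b))) :
    Submodule.span ℂ (Set.range A) ≤ Submodule.span ℂ (Set.range B) := by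
  refine Submodule.span_range_le_of_sum_conj_smul_mem (fun w => (aeval w).toLinearMap)
    (fun p hp => funext fun w => by simpa using hp w) A fun w => ?_
  have hgram : ∑ a, conj (eval w (A a)) • A a = ∑ b, conj (eval w (B b)) • B b :=
    funext fun z => by
      simpa [mul_comm] using sum_eval_mul_conj_eq_of_sum_normSq_eval_eq h z w
  change ∑ a, conj (eval w (A a)) • A a ∈ _
  rw [hgram]
  exact Submodule.sum_mem _ fun b _ => Submodule.smul_mem _ _ (Submodule.subset_span ⟨b, rfl⟩)

theorem span_range_eq_of_sum_normSq_eval_eq {A : ι → MvPolynomial σ ℂ}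
    {B : κ → MvPolynomial σ ℂ}
    (h : ∀ z, ∑ a, Complex.normSq (eval z (A a)) = ∑ b, Complex.normSq (eval z (B b))) :
    Submodule.span ℂ (Set.range A) = Submodule.span ℂ (Set.range B) :=
  le_antisymm (span_range_le_of_sum_normSq_eval_eq h)
    (span_range_le_of_sum_normSq_eval_eq fun z => (h z).symm)

theorem sum_normSq_eval_mul_X [Fintype σ] (H : ι → MvPolynomial σ ℂ) (z : σ → ℂ) :
    ∑ ki : ι × σ, Complex.normSq (eval z (H ki.1 * X ki.2)) =
      (∑ k, Complex.normSq (eval z (H k))) * ∑ i, Complex.normSq (z i) := by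
  simp [Finset.sum_mul_sum, ← Finset.sum_product', Complex.normSq_mul]

end MvPolynomial

/-- Let `F`, `G`, `P` be polynomial mappings on `ℂⁿ` with
`‖P(z)‖² = (‖F(z)‖² − ‖G(z)‖²)·‖z‖²` for all `z ∈ ℂⁿ`.  Then `V_P + V_{G⊗z} = V_{F⊗z}`;
in particular every product `G^k(z)·zⁱ` lies in the complex span of the products
`F^j(z)·zⁱ`. -/
theorem span_add_eq_of_sos_identity {n pF pG pP : ℕ}
    (F : Fin pF → MvPolynomial (Fin n) ℂ) (G : Fin pG → MvPolynomial (Fin n) ℂ)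
    (P : Fin pP → MvPolynomial (Fin n) ℂ)
    (h : ∀ z : Fin n → ℂ,
      ∑ k, Complex.normSq (MvPolynomial.eval z (P k)) =
        ((∑ j, Complex.normSq (MvPolynomial.eval z (F j))) -
            ∑ k, Complex.normSq (MvPolynomial.eval z (G k))) *
          ∑ i, Complex.normSq (z i)) :
    Submodule.span ℂ (Set.range P) ⊔
        Submodule.span ℂ
          (Set.range fun ki : Fin pG × Fin n => G ki.1 * MvPolynomial.X ki.2) =
      Submodule.span ℂ
        (Set.range fun ji : Fin pF × Fin n => F ji.1 * MvPolynomial.X ji.2) ∧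
    ∀ (k : Fin pG) (i : Fin n),
      G k * MvPolynomial.X i ∈
        Submodule.span ℂ
          (Set.range fun ji : Fin pF × Fin n => F ji.1 * MvPolynomial.X ji.2) := by
  have hspan := MvPolynomial.span_range_eq_of_sum_normSq_eval_eq
    (A := Sum.elim P fun ki : Fin pG × Fin n => G ki.1 * MvPolynomial.X ki.2)
    (B := fun ji : Fin pF × Fin n => F ji.1 * MvPolynomial.X ji.2) fun z => by
      rw [Fintype.sum_sum_type]
      simp only [Sum.elim_inl, Sum.elim_inr, MvPolynomial.sum_normSq_eval_mul_X, h z]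
      ring
  rw [Set.Sum.elim_range, Submodule.span_union] at hspan
  exact ⟨hspan, fun k i => hspan ▸ Submodule.mem_sup_right (Submodule.subset_span ⟨(k, i), rfl⟩)⟩
end
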